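/- arXiv:1506.07675 — 2 statements merged into one kernel-verified Lean document; each statement's English description precedes it below -/
import Mathlib

section
/- Let G = (V,E) be a simple cubic graph and let M(G) be the (|V|+3)×(|E|+3) binary matrix associated with G. Then G is 3-edge-colorable if and only if γ̄(M(G)) ≤ 3|V|+3. -/
/-! Common definitions: binary matrices, conflicts, row splits, conflict graphs,
containment, transitive orientations. -/

namespace MPP

variable {α β : Type*}

/-- Columns `i` and `j` of the binary matrix `M` are in conflict. -/
def InConflict (M : α → β → Bool) (i j : β) : Prop :=
  ∃ r r' r'' : α, M r i = true ∧ M r j = true ∧ M r' i = false ∧ M r' j = true ∧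
    M r'' i = true ∧ M r'' j = false

theorem InConflict.symm {M : α → β → Bool} {i j : β} (h : InConflict M i j) :
    InConflict M j i := by
  obtain ⟨r, r', r'', h1, h2, h3, h4, h5, h6⟩ := h
  exact ⟨r, r'', r', h2, h1, h6, h5, h4, h3⟩

theorem InConflict.ne {M : α → β → Bool} {i j : β} (h : InConflict M i j) : i ≠ j := by
  rintro rfl
  obtain ⟨r, r', r'', _, _, h3, h4, _, _⟩ := h
  rw [h3] at h4
  exact Bool.false_ne_true h4

/-- A binary matrix is conflict-free if no two of its columns are in conflict. -/
def ConflictFree (M : α → β → Bool) : Prop := ∀ i j : β, ¬ InConflict M i j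

/-- Column `i` of `M` is contained in column `j`. -/
def Contained (M : α → β → Bool) (i j : β) : Prop :=
  ∀ k : α, M k i = true → M k j = true

instance {α β : Type*} [Fintype α] (M : α → β → Bool) (i j : β) :
    Decidable (Contained M i j) :=
  inferInstanceAs (Decidable (∀ k : α, M k i = true → M k j = true))

/-- The conflict graph of a binary matrix `M`: vertices are all columns,
adjacent iff in conflict. -/
def conflictGraphAll (M : α → β → Bool) : SimpleGraph β where
  Adj i j := InConflict M i j
  symm := ⟨fun _ _ h => h.symm⟩
  loopless := ⟨fun _ h => h.ne rfl⟩

/-- The conflict graph `G_{M,r}`: vertices are the columns with a `1` in row `r`,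
adjacent iff the corresponding columns of `M` are in conflict. -/
def conflictGraph (M : α → β → Bool) (r : α) : SimpleGraph {j : β // M r j = true} where
  Adj a b := InConflict M a.1 b.1
  symm := ⟨fun _ _ h => h.symm⟩
  loopless := ⟨fun _ h => h.ne rfl⟩

/-- `M'` is a row split of `M` via the assignment `f` sending each row of `M'` to the row
of `M` it splits: each row `i` of `M` is the bitwise OR of the rows of `M'` mapped to `i`. -/
def IsRowSplit {α' : Type*} (M : α → β → Bool) (M' : α' → β → Bool) (f : α' → α) : Prop :=
  ∀ (i : α) (j : β), M i j = true ↔ ∃ k : α', f k = i ∧ M' k j = true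

/-- `γ̄(M)`: the minimum number of rows of a conflict-free row split of `M`. -/
noncomputable def gammaBar (M : α → β → Bool) : ℕ :=
  sInf {k : ℕ | ∃ (M' : Fin k → β → Bool) (f : Fin k → α),
    IsRowSplit M M' f ∧ ConflictFree M'}

/-- `η̄(M)`: the minimum number of pairwise distinct rows of a conflict-free row split of `M`. -/
noncomputable def etaBar (M : α → β → Bool) : ℕ :=
  sInf {d : ℕ | ∃ (k : ℕ) (M' : Fin k → β → Bool) (f : Fin k → α),
    IsRowSplit M M' f ∧ ConflictFree M' ∧ Nat.card (Set.range M') = d}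

/-- `o` is a transitive orientation of the graph `G`: it assigns to each edge `{u,v}`
exactly one of `(u,v)`, `(v,u)`, and is transitive. -/
def IsTransitiveOrientation {V : Type*} (G : SimpleGraph V) (o : V → V → Prop) : Prop :=
  (∀ u v, o u v → G.Adj u v) ∧
  (∀ u v, G.Adj u v → (o u v ↔ ¬ o v u)) ∧
  (∀ u v w, o u v → o v w → o u w)

/-- A graph is transitively orientable if it admits a transitive orientation. -/
def TransitivelyOrientable {V : Type*} (G : SimpleGraph V) : Prop :=
  ∃ o : V → V → Prop, IsTransitiveOrientation G o

/-- The undirected containment graph `H_M`: vertices are the columns of `M`, two distinct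
columns adjacent iff one is contained in the other. -/
def containmentGraph (M : α → β → Bool) : SimpleGraph β where
  Adj i j := i ≠ j ∧ (Contained M i j ∨ Contained M j i)
  symm := ⟨fun _ _ h => ⟨h.1.symm, h.2.symm⟩⟩
  loopless := ⟨fun _ h => h.1 rfl⟩

/-- In the directed containment graph `H⃗_{M,r}` (on the columns with a `1` in row `r`,
with an arc from `c_i` to `c_j` iff `i ≠ j` and `c_i` is contained in `c_j`),
the vertex `j` is a source, i.e., has no incoming arc. -/
def IsSourceCol (M : α → β → Bool) (r : α) (j : {c : β // M r c = true}) : Prop :=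
  ∀ i : {c : β // M r c = true}, i ≠ j → ¬ Contained M i.1 j.1

/-- `σ(M,r)`: the number of sources of the directed containment graph `H⃗_{M,r}`. -/
noncomputable def sigmaMr (M : α → β → Bool) (r : α) : ℕ :=
  Nat.card {j : {c : β // M r c = true} // IsSourceCol M r j}

end MPP

namespace MPP

/-- A set of edges is a matching if its elements are pairwise disjoint. -/
def IsMatchingSet {V : Type*} (s : Set (Sym2 V)) : Prop :=
  ∀ e ∈ s, ∀ f ∈ s, e ≠ f → ∀ v : V, ¬ (v ∈ e ∧ v ∈ f)

/-- A graph is 3-edge-colorable if its edge set can be partitioned into three matchings. -/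
def ThreeEdgeColorable {V : Type*} (G : SimpleGraph V) : Prop :=
  ∃ E₁ E₂ E₃ : Set (Sym2 V), E₁ ∪ E₂ ∪ E₃ = G.edgeSet ∧
    Disjoint E₁ E₂ ∧ Disjoint E₁ E₃ ∧ Disjoint E₂ E₃ ∧
    IsMatchingSet E₁ ∧ IsMatchingSet E₂ ∧ IsMatchingSet E₃

/-- The `(|V|+3) × (|E|+3)` binary matrix `M(G)` associated with a graph `G`, with rows indexed
by `V ∪ {r₁,r₂,r₃}` and columns indexed by `E ∪ {c₁,c₂,c₃}`. -/
def Mcubic {V : Type*} [DecidableEq V] (G : SimpleGraph V) :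
    (V ⊕ Fin 3) → (↥G.edgeSet ⊕ Fin 3) → Bool
  | Sum.inl v, Sum.inl e => decide (v ∈ (e : Sym2 V))
  | Sum.inl _, Sum.inr _ => true
  | Sum.inr _, Sum.inl _ => false
  | Sum.inr i, Sum.inr j => decide (i = j)

end MPP

/-! A 3-edge-coloring splits each vertex row `v` of `M(G)` into three rows, one per color `i`,
carrying `c_i` and the edges of color `i` at `v`; any two columns of this split are then nested
or disjoint, so it is conflict-free and has `3|V| + 3` rows.

Conversely, in a conflict-free row split the columns `c₁, c₂, c₃` are pairwise disjoint (each
`r_i` separates them), so every vertex row is split into at least three rows, and the bound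
`3|V| + 3` leaves exactly one row `g v i` per vertex `v` and color `i`. An edge column meets
some `g v i` and misses the row carrying `c_i` that comes from `r_i`, so it is contained in
`c_i`: this is the color of the edge. Two edges `vu ≠ vw` of the same color would both
appear in `g v i`, while `g u i` and `g w i` separate them, a conflict. -/

namespace MPP

section Conflict

variable {α β : Type*} {M : α → β → Bool}

theorem not_inConflict_of_contained {i j : β} (h : Contained M i j) : ¬ InConflict M i j := by
  rintro ⟨-, -, r, -, -, -, -, hi, hj⟩
  simp [h r hi] at hj

theorem conflictFree_of_nested
    (h : ∀ i j r, M r i = true → M r j = true → Contained M i j ∨ Contained M j i) :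
    ConflictFree M := by
  intro i j hij
  obtain ⟨r, -, -, hi, hj, -⟩ := id hij
  rcases h i j r hi hj with hc | hc
  · exact not_inConflict_of_contained hc hij
  · exact not_inConflict_of_contained hc hij.symm

theorem ConflictFree.contained {i j : β} (hM : ConflictFree M) {r r' : α}
    (hri : M r i = true) (hrj : M r j = true) (hr'i : M r' i = false) (hr'j : M r' j = true) :
    Contained M i j := by
  intro r'' hi
  by_contra hj
  exact hM i j ⟨r, r', r'', hri, hrj, hr'i, hr'j, hi, by simpa using hj⟩

end Conflict

section RowSplit

variable {α α' β : Type*} {M : α → β → Bool} {M' : α' → β → Bool} {f : α' → α}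

theorem IsRowSplit.apply_of_apply (hs : IsRowSplit M M' f) {k : α'} {j : β}
    (hk : M' k j = true) : M (f k) j = true :=
  (hs _ _).mpr ⟨k, rfl, hk⟩

theorem IsRowSplit.apply_eq_false (hs : IsRowSplit M M' f) {k : α'} {j : β}
    (hk : M (f k) j = false) : M' k j = false :=
  Bool.eq_false_iff.mpr fun h => by simp [hs.apply_of_apply h] at hk

theorem IsRowSplit.exists_apply (hs : IsRowSplit M M' f) {i : α} {j : β}
    (h : M i j = true) : ∃ k, f k = i ∧ M' k j = true :=
  (hs i j).mp h

theorem exists_conflictFree_rowSplit_fin [Fintype α'] (hs : IsRowSplit M M' f)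
    (hM' : ConflictFree M') :
    ∃ (N : Fin (Fintype.card α') → β → Bool) (g : Fin (Fintype.card α') → α),
      IsRowSplit M N g ∧ ConflictFree N := by
  set e := Fintype.equivFin α'
  refine ⟨M' ∘ e.symm, f ∘ e.symm, fun i j => (hs i j).trans e.exists_congr_left, ?_⟩
  rintro i j ⟨r, r', r'', h⟩
  exact hM' i j ⟨_, _, _, h⟩

theorem gammaBar_le_card [Fintype α'] (hs : IsRowSplit M M' f) (hM' : ConflictFree M') :
    gammaBar M ≤ Fintype.card α' :=
  Nat.sInf_le (exists_conflictFree_rowSplit_fin hs hM')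

/-- Splitting every `1`-entry into a row of its own gives a conflict-free row split, so the
infimum defining `gammaBar` is attained. -/
theorem exists_conflictFree_rowSplit_gammaBar [Finite α] [Finite β] (M : α → β → Bool) :
    ∃ (M' : Fin (gammaBar M) → β → Bool) (f : Fin (gammaBar M) → α),
      IsRowSplit M M' f ∧ ConflictFree M' := by
  classical
  cases nonempty_fintype α
  cases nonempty_fintype β
  have hsplit : IsRowSplit M (fun p j => M p.1 p.2 && decide (j = p.2)) Prod.fst := by
    intro i j
    simp
  have hfree : ConflictFree fun (p : α × β) j => M p.1 p.2 && decide (j = p.2) := by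
    rintro i j ⟨r, r', -, hi, hj, hr'i, hr'j, -⟩
    simp only [Bool.and_eq_true, decide_eq_true_eq] at hi hj hr'j
    simp [hr'j.2, ← hj.2, hi.2, hr'j.1] at hr'i
  exact Nat.sInf_mem (s := {k | ∃ (N : Fin k → β → Bool) (g : Fin k → α),
    IsRowSplit M N g ∧ ConflictFree N}) ⟨_, exists_conflictFree_rowSplit_fin hsplit hfree⟩

end RowSplit

theorem lineGraph_coloring_eq_of_mem {V β : Type*} {G : SimpleGraph V}
    (C : G.lineGraph.Coloring β) {e e' : G.edgeSet} {v : V} (he : v ∈ (e : Sym2 V))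
    (he' : v ∈ (e' : Sym2 V)) (h : C e = C e') : e = e' := by
  by_contra hne
  exact C.valid (SimpleGraph.lineGraph_adj_iff_exists.mpr ⟨hne, v, he, he'⟩) h

theorem colorable_lineGraph_of_threeEdgeColorable {V : Type*} {G : SimpleGraph V}
    (hG : ThreeEdgeColorable G) : G.lineGraph.Colorable 3 := by
  obtain ⟨E₁, E₂, E₃, hcover, -, -, -, h₁, h₂, h₃⟩ := hG
  set E : Fin 3 → Set (Sym2 V) := ![E₁, E₂, E₃]
  have hmatch : ∀ i, IsMatchingSet (E i) := by
    intro i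
    fin_cases i
    exacts [h₁, h₂, h₃]
  have hmem : ∀ e : G.edgeSet, ∃ i, (e : Sym2 V) ∈ E i := by
    rintro ⟨e, he⟩
    rw [← hcover] at he
    rcases he with (he | he) | he
    exacts [⟨0, he⟩, ⟨1, he⟩, ⟨2, he⟩]
  choose c hc using hmem
  refine ⟨.mk c fun {e e'} hadj hce => ?_⟩
  obtain ⟨hne, v, hv, hv'⟩ := SimpleGraph.lineGraph_adj_iff_exists.mp hadj
  exact hmatch (c e) e (hc e) e' (hce ▸ hc e') (Subtype.coe_ne_coe.mpr hne) v ⟨hv, hv'⟩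

theorem threeEdgeColorable_of_coloring {V : Type*} {G : SimpleGraph V}
    (C : G.lineGraph.Coloring (Fin 3)) : ThreeEdgeColorable G := by
  set E : Fin 3 → Set (Sym2 V) := fun i => Subtype.val '' (C ⁻¹' {i})
  have hdisj : ∀ i j, i ≠ j → Disjoint (E i) (E j) := by
    rintro i j hij
    rw [Set.disjoint_left]
    rintro _ ⟨e, rfl, rfl⟩ ⟨e', he', hee'⟩
    exact hij (Subtype.ext hee' ▸ he')
  have hmatch : ∀ i, IsMatchingSet (E i) := by
    rintro i _ ⟨e, he, rfl⟩ _ ⟨e', he', rfl⟩ hne v ⟨hv, hv'⟩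
    exact hne (congrArg Subtype.val (lineGraph_coloring_eq_of_mem C hv hv' (he.trans he'.symm)))
  refine ⟨E 0, E 1, E 2, ?_, hdisj 0 1 (by decide), hdisj 0 2 (by decide),
    hdisj 1 2 (by decide), hmatch 0, hmatch 1, hmatch 2⟩
  ext e
  constructor
  · rintro ((⟨e, -, rfl⟩ | ⟨e, -, rfl⟩) | ⟨e, -, rfl⟩) <;> exact e.2
  · intro he
    have hE : e ∈ E (C ⟨e, he⟩) := ⟨⟨e, he⟩, rfl, rfl⟩
    generalize C ⟨e, he⟩ = i at hE
    fin_cases i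
    exacts [Or.inl (Or.inl hE), Or.inl (Or.inr hE), Or.inr hE]

theorem threeEdgeColorable_iff_colorable_lineGraph {V : Type*} (G : SimpleGraph V) :
    ThreeEdgeColorable G ↔ G.lineGraph.Colorable 3 :=
  ⟨colorable_lineGraph_of_threeEdgeColorable, fun ⟨C⟩ => threeEdgeColorable_of_coloring C⟩

section ColoringSplit

variable {V : Type*} [DecidableEq V] {G : SimpleGraph V}

/-- Row `(v, i)` keeps, from row `v` of `M(G)`, the edges at `v` of color `i` and the column
`c_i`; the rows `r_i` are kept as they are. -/
def coloringSplit (C : G.lineGraph.Coloring (Fin 3)) :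
    ((V × Fin 3) ⊕ Fin 3) → (↥G.edgeSet ⊕ Fin 3) → Bool
  | Sum.inl (v, i), Sum.inl e => decide (v ∈ (e : Sym2 V) ∧ C e = i)
  | Sum.inl (_, i), Sum.inr j => decide (i = j)
  | Sum.inr _, Sum.inl _ => false
  | Sum.inr i, Sum.inr j => decide (i = j)

theorem isRowSplit_coloringSplit (C : G.lineGraph.Coloring (Fin 3)) :
    IsRowSplit (Mcubic G) (coloringSplit C) (Sum.map Prod.fst id) := by
  rintro (v | i) (e | j) <;> simp [Mcubic, coloringSplit]

theorem contained_coloringSplit (C : G.lineGraph.Coloring (Fin 3)) (e : G.edgeSet) :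
    Contained (coloringSplit C) (Sum.inl e) (Sum.inr (C e)) := by
  rintro ((⟨v, i⟩ | i)) h <;> simp_all [coloringSplit]

theorem conflictFree_coloringSplit (C : G.lineGraph.Coloring (Fin 3)) :
    ConflictFree (coloringSplit C) := by
  refine conflictFree_of_nested ?_
  rintro (e | j) (e' | j') (⟨v, i⟩ | i) hx hy <;>
    simp only [coloringSplit, decide_eq_true_eq, Bool.false_eq_true] at hx hy
  · rw [lineGraph_coloring_eq_of_mem C hx.1 hy.1 (hx.2.trans hy.2.symm)]
    exact Or.inl fun _ => id
  · exact Or.inl (hy ▸ hx.2 ▸ contained_coloringSplit C e)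
  · exact Or.inr (hx ▸ hy.2 ▸ contained_coloringSplit C e')
  all_goals exact Or.inl (hx ▸ hy ▸ fun _ => id)

theorem gammaBar_Mcubic_le [Fintype V] (C : G.lineGraph.Coloring (Fin 3)) :
    gammaBar (Mcubic G) ≤ 3 * Fintype.card V + 3 :=
  (gammaBar_le_card (isRowSplit_coloringSplit C) (conflictFree_coloringSplit C)).trans_eq
    (by simp [mul_comm])

end ColoringSplit

theorem _root_.Sym2.exists_mem_notMem_of_ne {V : Type*} {e e' : Sym2 V} (he : ¬ e.IsDiag)
    (hne : e ≠ e') : ∃ u ∈ e, u ∉ e' := by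
  induction e using Sym2.ind with | _ a b => ?_
  by_contra! h
  exact hne ((Sym2.mem_and_mem_iff he).mp
    ⟨h a (Sym2.mem_mk_left a b), h b (Sym2.mem_mk_right a b)⟩).symm

section OptimalSplit

variable {V R : Type*} [DecidableEq V] {G : SimpleGraph V}
  {M' : R → (↥G.edgeSet ⊕ Fin 3) → Bool} {f : R → V ⊕ Fin 3}

theorem exists_row_inr (hs : IsRowSplit (Mcubic G) M' f) (i : Fin 3) :
    ∃ k, f k = Sum.inr i ∧ M' k (Sum.inr i) = true :=
  hs.exists_apply (i := Sum.inr i) (j := Sum.inr i) (by simp [Mcubic])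

theorem apply_inl_eq_false (hs : IsRowSplit (Mcubic G) M' f) {k : R} {w : V}
    {e : G.edgeSet} (hk : f k = Sum.inl w) (hw : w ∉ (e : Sym2 V)) :
    M' k (Sum.inl e) = false :=
  hs.apply_eq_false (by rw [hk]; simpa [Mcubic])

theorem eq_of_apply_inr (hs : IsRowSplit (Mcubic G) M' f) (hM' : ConflictFree M') {k : R}
    {i j : Fin 3} (hi : M' k (Sum.inr i) = true) (hj : M' k (Sum.inr j) = true) : i = j := by
  by_contra hij
  obtain ⟨ki, hki, hki'⟩ := exists_row_inr hs i
  obtain ⟨kj, hkj, hkj'⟩ := exists_row_inr hs j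
  refine hM' _ _ ⟨k, kj, ki, hi, hj, hs.apply_eq_false ?_, hkj', hki', hs.apply_eq_false ?_⟩
  · rw [hkj]; simp [Mcubic, Ne.symm hij]
  · rw [hki]; simp [Mcubic, hij]

structure IsVertexRowLabelling (M' : R → (↥G.edgeSet ⊕ Fin 3) → Bool) (f : R → V ⊕ Fin 3)
    (g : V → Fin 3 → R) : Prop where
  map_eq : ∀ v i, f (g v i) = Sum.inl v
  apply_inr : ∀ v i, M' (g v i) (Sum.inr i) = true
  exists_eq : ∀ k v, f k = Sum.inl v → ∃ i, k = g v i

theorem exists_rows_of_card_le [Fintype V] [Fintype R] (hs : IsRowSplit (Mcubic G) M' f)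
    (hM' : ConflictFree M') (hcard : Fintype.card R ≤ 3 * Fintype.card V + 3) :
    ∃ g, IsVertexRowLabelling M' f g := by
  choose g hg using fun v i =>
    hs.exists_apply (i := Sum.inl v) (j := Sum.inr i) (by simp [Mcubic])
  choose h hh using exists_row_inr hs
  set ι : (V × Fin 3) ⊕ Fin 3 → R := Sum.elim (fun p => g p.1 p.2) h
  have hι : Function.Injective ι := by
    rintro (⟨v, i⟩ | i) (⟨w, j⟩ | j) heq <;> simp only [ι, Sum.elim_inl, Sum.elim_inr] at heq
    · have hvw : v = w := by simpa [(hg v i).1, (hg w j).1] using congrArg f heq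
      subst hvw
      rw [eq_of_apply_inr hs hM' (hg v i).2 (heq ▸ (hg v j).2)]
    · simpa [(hg v i).1, (hh j).1] using congrArg f heq
    · simpa [(hh i).1, (hg w j).1] using congrArg f heq
    · rw [eq_of_apply_inr hs hM' (hh i).2 (heq ▸ (hh j).2)]
  have hbij : Function.Bijective ι := (Fintype.bijective_iff_injective_and_card ι).mpr
    ⟨hι, (Fintype.card_le_of_injective ι hι).antisymm (by simpa [mul_comm] using hcard)⟩
  refine ⟨g, fun v i => (hg v i).1, fun v i => (hg v i).2, fun k v hk => ?_⟩
  obtain ⟨⟨w, i⟩ | i, rfl⟩ := hbij.2 k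
  · obtain rfl : w = v := by simpa [ι, (hg w i).1] using hk
    exact ⟨i, rfl⟩
  · simp [ι, (hh i).1] at hk

variable {g : V → Fin 3 → R}

theorem exists_contained_inl_inr (hs : IsRowSplit (Mcubic G) M' f) (hM' : ConflictFree M')
    (hg : IsVertexRowLabelling M' f g) (e : G.edgeSet) :
    ∃ i, Contained M' (Sum.inl e) (Sum.inr i) := by
  obtain ⟨v, hv⟩ : ∃ v, v ∈ (e : Sym2 V) := ⟨_, Sym2.out_fst_mem _⟩
  obtain ⟨k, hk, hke⟩ := hs.exists_apply (i := Sum.inl v) (j := Sum.inl e) (by simpa [Mcubic])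
  obtain ⟨i, rfl⟩ := hg.exists_eq k v hk
  obtain ⟨r, hr, hri⟩ := exists_row_inr hs i
  exact ⟨i, hM'.contained hke (hg.apply_inr v i) (hs.apply_eq_false (by rw [hr]; rfl)) hri⟩

theorem apply_inl_of_contained (hs : IsRowSplit (Mcubic G) M' f) (hM' : ConflictFree M')
    (hg : IsVertexRowLabelling M' f g) {e : G.edgeSet} {i : Fin 3} {v : V}
    (he : Contained M' (Sum.inl e) (Sum.inr i)) (hv : v ∈ (e : Sym2 V)) :
    M' (g v i) (Sum.inl e) = true := by
  obtain ⟨k, hk, hke⟩ := hs.exists_apply (i := Sum.inl v) (j := Sum.inl e) (by simpa [Mcubic])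
  obtain ⟨j, rfl⟩ := hg.exists_eq k v hk
  rwa [eq_of_apply_inr hs hM' (he _ hke) (hg.apply_inr v j)]

theorem eq_of_contained_of_mem (hs : IsRowSplit (Mcubic G) M' f) (hM' : ConflictFree M')
    (hg : IsVertexRowLabelling M' f g) {e e' : G.edgeSet} {i : Fin 3} {v : V}
    (he : Contained M' (Sum.inl e) (Sum.inr i)) (he' : Contained M' (Sum.inl e') (Sum.inr i))
    (hv : v ∈ (e : Sym2 V)) (hv' : v ∈ (e' : Sym2 V)) : e = e' := by
  by_contra hne
  obtain ⟨u, hu, hu'⟩ := Sym2.exists_mem_notMem_of_ne (G.not_isDiag_of_mem_edgeSet e.2)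
    (Subtype.coe_ne_coe.mpr hne)
  obtain ⟨w, hw', hw⟩ := Sym2.exists_mem_notMem_of_ne (G.not_isDiag_of_mem_edgeSet e'.2)
    (Subtype.coe_ne_coe.mpr (Ne.symm hne))
  have carries : ∀ {a : G.edgeSet} {x : V}, Contained M' (Sum.inl a) (Sum.inr i) →
      x ∈ (a : Sym2 V) → M' (g x i) (Sum.inl a) = true :=
    apply_inl_of_contained hs hM' hg
  exact hM' _ _ ⟨g v i, g w i, g u i, carries he hv, carries he' hv',
    apply_inl_eq_false hs (hg.map_eq w i) hw, carries he' hw', carries he hu,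
    apply_inl_eq_false hs (hg.map_eq u i) hu'⟩

theorem colorable_lineGraph_of_gammaBar_le [Fintype V]
    (h : gammaBar (Mcubic G) ≤ 3 * Fintype.card V + 3) : G.lineGraph.Colorable 3 := by
  obtain ⟨M', f, hs, hM'⟩ := exists_conflictFree_rowSplit_gammaBar (Mcubic G)
  obtain ⟨g, hg⟩ := exists_rows_of_card_le hs hM' (by simpa using h)
  choose c hc using exists_contained_inl_inr hs hM' hg
  refine ⟨.mk c fun {e e'} hadj hce => ?_⟩
  obtain ⟨hne, v, hv, hv'⟩ := SimpleGraph.lineGraph_adj_iff_exists.mp hadj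
  exact hne (eq_of_contained_of_mem hs hM' hg (hc e) (hce ▸ hc e') hv hv')

end OptimalSplit

theorem stmt_12_general {V : Type*} [Fintype V] [DecidableEq V] (G : SimpleGraph V) :
    ThreeEdgeColorable G ↔ gammaBar (Mcubic G) ≤ 3 * Fintype.card V + 3 :=
  (threeEdgeColorable_iff_colorable_lineGraph G).trans
    ⟨fun ⟨C⟩ => gammaBar_Mcubic_le C, colorable_lineGraph_of_gammaBar_le⟩

/-- A simple cubic graph `G` is 3-edge-colorable iff `γ̄(M(G)) ≤ 3|V|+3`. -/
theorem stmt_12 {V : Type*} [Fintype V] [DecidableEq V] (G : SimpleGraph V)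
    [DecidableRel G.Adj] (hcubic : ∀ v : V, G.degree v = 3) :
    ThreeEdgeColorable G ↔ gammaBar (Mcubic G) ≤ 3 * Fintype.card V + 3 :=
  stmt_12_general G

end MPP
end

section
/- Let M be an m×n binary matrix with no all-zero row, and let c be a proper vertex coloring of the complement of the undirected containment graph H_M. Define a binary matrix M' with n columns as follows: for each row r of M, letting c(V(G_{M,r})) = {s_1,…,s_t} be the set of colors assigned by c to the columns j with M_{r,j}=1, add t rows r'_1,…,r'_t to M', where M'_{r'_i, j} = 1 if and only if M_{r,j} = 1 and c(j) = s_i. Then M' is a conflict-free row split of M. -/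
namespace MPP

/-- The matrix built by the heuristic algorithm from a coloring `c` of the columns: for each
row `r` of `M` and each color `s` used by `c` on the columns having a `1` in row `r`, there is
a row whose entry in column `j` is `1` iff `M_{r,j} = 1` and `c j = s`. -/
def heurMatrix {m n : ℕ} {γ : Type*} [DecidableEq γ] (M : Fin m → Fin n → Bool)
    (c : Fin n → γ) :
    (Σ r : Fin m, {s : γ // ∃ j : Fin n, M r j = true ∧ c j = s}) → Fin n → Bool :=
  fun p j => M p.1 j && decide (c j = p.2.1)

section

variable {α β : Type*}

theorem InConflict.not_contained {M : α → β → Bool} {i j : β} (h : InConflict M i j) :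
    ¬ Contained M i j := by
  obtain ⟨-, -, r'', -, -, -, -, hi, hj⟩ := h
  intro hij
  simp [hij r'' hi] at hj

theorem contained_or_contained_of_color_eq {γ : Type*} {M : α → β → Bool} {c : β → γ}
    (hc : ∀ i j, (containmentGraph M)ᶜ.Adj i j → c i ≠ c j) {i j : β} (hcij : c i = c j) :
    Contained M i j ∨ Contained M j i := by
  by_cases hij : i = j
  · exact .inl (hij ▸ fun _ => id)
  · by_contra h
    exact hc i j ⟨hij, fun hadj => h hadj.2⟩ hcij

end

section heurMatrix

variable {m n : ℕ} {γ : Type*} [DecidableEq γ] {M : Fin m → Fin n → Bool} {c : Fin n → γ}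

theorem heurMatrix_eq_true_iff {p : Σ r : Fin m, {s : γ // ∃ j, M r j = true ∧ c j = s}}
    {j : Fin n} : heurMatrix M c p j = true ↔ M p.1 j = true ∧ c j = p.2.1 := by
  simp [heurMatrix]

theorem heurMatrix_contained {i j : Fin n} (hcij : c i = c j) (h : Contained M i j) :
    Contained (heurMatrix M c) i j := by
  intro p hp
  rw [heurMatrix_eq_true_iff] at hp ⊢
  exact ⟨h _ hp.1, hcij ▸ hp.2⟩

/- Two columns in conflict share a `1` in some row of the split, hence have the same color,
so by properness one contains the other in `M`, and then also in the split. -/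
theorem heurMatrix_conflictFree
    (hc : ∀ i j : Fin n, (containmentGraph M)ᶜ.Adj i j → c i ≠ c j) :
    ConflictFree (heurMatrix M c) := by
  intro i j h
  obtain ⟨p, -, -, hpi, hpj, -⟩ := id h
  rw [heurMatrix_eq_true_iff] at hpi hpj
  have hcij : c i = c j := hpi.2.trans hpj.2.symm
  rcases contained_or_contained_of_color_eq hc hcij with hij | hji
  · exact h.not_contained (heurMatrix_contained hcij hij)
  · exact h.symm.not_contained (heurMatrix_contained hcij.symm hji)

theorem heurMatrix_isRowSplit (M : Fin m → Fin n → Bool) (c : Fin n → γ) :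
    IsRowSplit M (heurMatrix M c) (fun p => p.1) := by
  intro r j
  constructor
  · intro h
    exact ⟨⟨r, c j, j, h, rfl⟩, rfl, heurMatrix_eq_true_iff.2 ⟨h, rfl⟩⟩
  · rintro ⟨p, rfl, hp⟩
    exact (heurMatrix_eq_true_iff.1 hp).1

end heurMatrix

theorem stmt_18_general {m n : ℕ} {γ : Type*} [DecidableEq γ] (M : Fin m → Fin n → Bool)
    (c : Fin n → γ)
    (hc : ∀ i j : Fin n, (containmentGraph M)ᶜ.Adj i j → c i ≠ c j) :
    ConflictFree (heurMatrix M c) ∧ IsRowSplit M (heurMatrix M c) (fun p => p.1) :=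
  ⟨heurMatrix_conflictFree hc, heurMatrix_isRowSplit M c⟩

/-- If `c` is a proper coloring of the complement of the undirected containment graph `H_M`,
then the matrix built by the heuristic algorithm is a conflict-free row split of `M`. -/
theorem stmt_18 {m n : ℕ} {γ : Type*} [DecidableEq γ] (M : Fin m → Fin n → Bool)
    (hrow : ∀ r : Fin m, ∃ j, M r j = true) (c : Fin n → γ)
    (hc : ∀ i j : Fin n, (containmentGraph M)ᶜ.Adj i j → c i ≠ c j) :
    ConflictFree (heurMatrix M c) ∧ IsRowSplit M (heurMatrix M c) (fun p => p.1) :=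
  stmt_18_general M c hc

end MPP
end
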